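/- Let μ ⊆ λ be Young diagrams. The map Φ : X_μ^λ → X_μ^λ is an involution: Φ(Φ(T)) = T for every T ∈ X_μ^λ. -/
import Mathlib


/-- The cells of the skew shape `λ/μ`. -/
def skewCells (μ lam : YoungDiagram) : Finset (ℕ × ℕ) := lam.cells \ μ.cells

/-- The total order on cells induced by a filling `f`: a cell `c = (i,j)` is smaller than
`c' = (i',j')` if `f c < f c'`, or `f c = f c'` and `j < j'`, or
`f c = f c'`, `j = j'` and `i > i'`. -/
def cellLT (f : ℕ × ℕ → ℕ) (c c' : ℕ × ℕ) : Prop :=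
  f c < f c' ∨ (f c = f c' ∧ (c.2 < c'.2 ∨ (c.2 = c'.2 ∧ c'.1 < c.1)))

/-- `f` is a semistandard filling on the cell set `s`: entries are positive,
weakly increasing along rows (left to right) and strictly increasing down columns. -/
def IsSSYTOn (f : ℕ × ℕ → ℕ) (s : Finset (ℕ × ℕ)) : Prop :=
  (∀ c ∈ s, 0 < f c) ∧
  (∀ i j j', j ≤ j' → (i, j) ∈ s → (i, j') ∈ s → f (i, j) ≤ f (i, j')) ∧
  (∀ i i' j, i < i' → (i, j) ∈ s → (i', j) ∈ s → f (i, j) < f (i', j))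

/-- An element of `X_μ^λ`: a chain `μ = λ₀ ⊊ λ₁ ⊊ ⋯ ⊊ λ_k = λ` of Young diagrams together
with a filling of `λ/μ` whose restriction to each piece `λᵢ₊₁/λᵢ` is a semistandard Young
tableau.  (The tuple `(T⁽¹⁾, …, T⁽ᵏ⁾)` is recorded as the single concatenated filling
`entry`, normalized to be `0` outside `λ/μ`; the chain is recorded as a function on `ℕ`
constantly equal to `λ` from index `k` on.) -/
structure XTuple (μ lam : YoungDiagram) where
  k : ℕ
  chain : ℕ → YoungDiagram
  chain_zero : chain 0 = μ
  chain_last : ∀ i, k ≤ i → chain i = lam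
  chain_strict : ∀ i < k, (chain i).cells ⊂ (chain (i + 1)).cells
  entry : ℕ × ℕ → ℕ
  entry_eq_zero : ∀ c ∉ skewCells μ lam, entry c = 0
  piece_ssyt : ∀ i < k, IsSSYTOn entry ((chain (i + 1)).cells \ (chain i).cells)

/-- The cells of the `i`-th piece `T⁽ⁱ⁺¹⁾` (0-indexed: piece `i` has shape `λᵢ₊₁/λᵢ`). -/
def pieceCells {μ lam : YoungDiagram} (T : XTuple μ lam) (i : ℕ) : Finset (ℕ × ℕ) :=
  (T.chain (i + 1)).cells \ (T.chain i).cells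

/-- The length `ℓ(T) = k` of an element of `X_μ^λ`. -/
def XTuple.len {μ lam : YoungDiagram} (T : XTuple μ lam) : ℕ := T.k

/-- The cell `c`, lying in piece `i`, is splittable: its piece has more than one cell and
`c` is the largest cell of its piece. -/
def SplittableAt {μ lam : YoungDiagram} (T : XTuple μ lam) (c : ℕ × ℕ) (i : ℕ) : Prop :=
  i < T.k ∧ c ∈ pieceCells T i ∧ 1 < (pieceCells T i).card ∧
    ∀ c' ∈ pieceCells T i, c' ≠ c → cellLT T.entry c' c

/-- The cell `c` is splittable in `T`. -/
def SplittableCell {μ lam : YoungDiagram} (T : XTuple μ lam) (c : ℕ × ℕ) : Prop :=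
  ∃ i, SplittableAt T c i

/-- The cell `c`, lying in piece `i`, is mergeable: it is not in the first piece, its piece
is a single cell, the union of its piece with the previous piece is semistandard, and `c`
is larger than every cell of the previous piece. -/
def MergeableAt {μ lam : YoungDiagram} (T : XTuple μ lam) (c : ℕ × ℕ) (i : ℕ) : Prop :=
  1 ≤ i ∧ i < T.k ∧ c ∈ pieceCells T i ∧ (pieceCells T i).card = 1 ∧
    IsSSYTOn T.entry (pieceCells T (i - 1) ∪ pieceCells T i) ∧
    ∀ c' ∈ pieceCells T (i - 1), cellLT T.entry c' c

/-- The cell `c` is mergeable in `T`. -/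
def MergeableCell {μ lam : YoungDiagram} (T : XTuple μ lam) (c : ℕ × ℕ) : Prop :=
  ∃ i, MergeableAt T c i

/-- `cell(T)`: the largest cell of `T` (in the total order `cellLT T.entry`) among the
splittable or mergeable cells, or `none` (i.e. `∅`) if there is no such cell. -/
noncomputable def cellOf {μ lam : YoungDiagram} (T : XTuple μ lam) : Option (ℕ × ℕ) := by
  classical
  exact if h : ∃ c, (SplittableCell T c ∨ MergeableCell T c) ∧
      ∀ c', (SplittableCell T c' ∨ MergeableCell T c') → c' ≠ c → cellLT T.entry c' c
    then some h.choose else none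

/-- `T` is splittable if `cell(T)` is a splittable cell. -/
def XTuple.Splittable {μ lam : YoungDiagram} (T : XTuple μ lam) : Prop :=
  ∃ c, cellOf T = some c ∧ SplittableCell T c

/-- `T` is mergeable if `cell(T)` is a mergeable cell. -/
def XTuple.Mergeable {μ lam : YoungDiagram} (T : XTuple μ lam) : Prop :=
  ∃ c, cellOf T = some c ∧ MergeableCell T c

/-- The graph of the map `Φ`:  if `cell(T)` is splittable and lies in piece `i`, the piece
is replaced by the pair `(T⁽ⁱ⁾ ∖ {cell(T)}, {cell(T)})`, i.e. the Young diagram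
`λᵢ₊₁ ∖ {cell(T)}` is inserted into the chain; if `cell(T)` is mergeable and lies in piece
`i`, the pieces `i-1` and `i` are merged, i.e. `λᵢ` is deleted from the chain; if
`cell(T) = ∅` then `T` is fixed.  The filling is unchanged in all cases. -/
def PhiRel {μ lam : YoungDiagram} (T T' : XTuple μ lam) : Prop :=
  (∃ c i, cellOf T = some c ∧ SplittableAt T c i ∧
      T'.k = T.k + 1 ∧ T'.entry = T.entry ∧
      (∀ j, j ≤ i → T'.chain j = T.chain j) ∧
      (T'.chain (i + 1)).cells = (T.chain (i + 1)).cells.erase c ∧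
      (∀ j, i + 2 ≤ j → T'.chain j = T.chain (j - 1))) ∨
  (∃ c i, cellOf T = some c ∧ MergeableAt T c i ∧
      T'.k + 1 = T.k ∧ T'.entry = T.entry ∧
      (∀ j, j < i → T'.chain j = T.chain j) ∧
      (∀ j, i ≤ j → T'.chain j = T.chain (j + 1))) ∨
  (cellOf T = none ∧ T' = T)

/-- The map `Φ : X_μ^λ → X_μ^λ`. -/
noncomputable def Phi {μ lam : YoungDiagram} (T : XTuple μ lam) : XTuple μ lam := by
  classical
  exact if h : ∃ T', PhiRel T T' then h.choose else T

section Aux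

variable {μ lam : YoungDiagram}

lemma cellLT_trans {f : ℕ × ℕ → ℕ} {a b c : ℕ × ℕ} (h1 : cellLT f a b) (h2 : cellLT f b c) :
    cellLT f a c := by
  simp only [cellLT] at *; omega

lemma cellLT_asymm {f : ℕ × ℕ → ℕ} {a b : ℕ × ℕ} (h1 : cellLT f a b) (h2 : cellLT f b a) :
    False := by
  simp only [cellLT] at *; omega

lemma cellLT_total {f : ℕ × ℕ → ℕ} {a b : ℕ × ℕ} (h : a ≠ b) :
    cellLT f a b ∨ cellLT f b a := by
  have h' : ¬(a.1 = b.1 ∧ a.2 = b.2) := by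
    rintro ⟨h1, h2⟩; exact h (Prod.ext h1 h2)
  simp only [cellLT]; omega

lemma XTuple.ext' {T1 T2 : XTuple μ lam} (hk : T1.k = T2.k) (hc : T1.chain = T2.chain)
    (he : T1.entry = T2.entry) : T1 = T2 := by
  cases T1; cases T2; dsimp at hk hc he; subst hk; subst hc; subst he; rfl

lemma chain_succ_subset (T : XTuple μ lam) (i : ℕ) :
    (T.chain i).cells ⊆ (T.chain (i + 1)).cells := by
  by_cases h : i < T.k
  · exact (T.chain_strict i h).subset
  · rw [T.chain_last i (by omega), T.chain_last (i + 1) (by omega)]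

lemma chain_mono (T : XTuple μ lam) {i j : ℕ} (h : i ≤ j) :
    (T.chain i).cells ⊆ (T.chain j).cells := by
  induction j with
  | zero => obtain rfl : i = 0 := by omega
            exact Finset.Subset.refl _
  | succ n ih =>
    rcases Nat.lt_or_ge i (n + 1) with h' | h'
    · exact (ih (by omega)).trans (chain_succ_subset T n)
    · obtain rfl : i = n + 1 := by omega
      exact Finset.Subset.refl _

lemma mem_piece_unique (T : XTuple μ lam) {c : ℕ × ℕ} {i j : ℕ}
    (hi : c ∈ pieceCells T i) (hj : c ∈ pieceCells T j) : i = j := by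
  simp only [pieceCells, Finset.mem_sdiff] at hi hj
  by_contra hne
  rcases Nat.lt_or_ge i j with h | h
  · exact hj.2 (chain_mono T (by omega) hi.1)
  · exact hi.2 (chain_mono T (by omega) hj.1)

lemma IsSSYTOn.mono {f : ℕ × ℕ → ℕ} {s t : Finset (ℕ × ℕ)} (hst : t ⊆ s)
    (h : IsSSYTOn f s) : IsSSYTOn f t :=
  ⟨fun c hc => h.1 c (hst hc),
   fun i j j' hj h1 h2 => h.2.1 i j j' hj (hst h1) (hst h2),
   fun i i' j hi h1 h2 => h.2.2 i i' j hi (hst h1) (hst h2)⟩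

/-- The defining property of `cellOf T = some c`. -/
def IsCellOf (T : XTuple μ lam) (c : ℕ × ℕ) : Prop :=
  (SplittableCell T c ∨ MergeableCell T c) ∧
    ∀ c', (SplittableCell T c' ∨ MergeableCell T c') → c' ≠ c → cellLT T.entry c' c

lemma isCellOf_unique {T : XTuple μ lam} {c c' : ℕ × ℕ} (h1 : IsCellOf T c)
    (h2 : IsCellOf T c') : c = c' := by
  by_contra hne
  exact cellLT_asymm (h1.2 c' h2.1 (Ne.symm hne)) (h2.2 c h1.1 hne)

lemma cellOf_eq_some_iff {T : XTuple μ lam} {c : ℕ × ℕ} :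
    cellOf T = some c ↔ IsCellOf T c := by
  unfold cellOf
  constructor
  · intro h
    split at h
    · next hex =>
      have := hex.choose_spec
      rw [Option.some_inj] at h
      rw [← h]
      exact this
    · simp at h
  · intro hc
    have hex : ∃ c, (SplittableCell T c ∨ MergeableCell T c) ∧
        ∀ c', (SplittableCell T c' ∨ MergeableCell T c') → c' ≠ c → cellLT T.entry c' c := ⟨c, hc⟩
    rw [dif_pos hex, Option.some_inj]
    exact isCellOf_unique hex.choose_spec hc

lemma ssyt_union_single (T : XTuple μ lam) {i : ℕ} (hik : i + 1 < T.k) {d : ℕ × ℕ}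
    (hd : d ∈ pieceCells T (i + 1)) (hmax : ∀ e ∈ pieceCells T i, cellLT T.entry e d) :
    IsSSYTOn T.entry (pieceCells T i ∪ {d}) := by
  obtain ⟨h1, h2, h3⟩ := T.piece_ssyt i (by omega)
  obtain ⟨g1, _, _⟩ := T.piece_ssyt (i + 1) hik
  have hdnot : d ∉ (T.chain (i + 1)).cells := by
    simp only [pieceCells, Finset.mem_sdiff] at hd; exact hd.2
  have hgeo : ∀ e ∈ pieceCells T i, ¬(d.1 ≤ e.1 ∧ d.2 ≤ e.2) := by
    rintro e he ⟨ha, hb⟩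
    have he1 : e ∈ (T.chain (i + 1)).cells := by
      simp only [pieceCells, Finset.mem_sdiff] at he; exact he.1
    apply hdnot
    rw [YoungDiagram.mem_cells] at he1 ⊢
    have := (T.chain (i + 1)).up_left_mem ha hb (by rw [Prod.mk.eta]; exact he1)
    rwa [Prod.mk.eta] at this
  refine ⟨?_, ?_, ?_⟩
  · intro x hx
    rcases Finset.mem_union.mp hx with hx | hx
    · exact h1 x hx
    · rw [Finset.mem_singleton] at hx; subst hx; exact g1 x hd
  · intro r a b hab hA hB
    rcases Finset.mem_union.mp hA with hA | hA <;> rcases Finset.mem_union.mp hB with hB | hB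
    · exact h2 r a b hab hA hB
    · rw [Finset.mem_singleton] at hB
      rcases hmax (r, a) hA with h | ⟨h, _⟩
      · rw [hB]; exact le_of_lt h
      · rw [hB]; exact le_of_eq h
    · rw [Finset.mem_singleton] at hA
      exact absurd ⟨by rw [← hA], by rw [← hA]; exact hab⟩ (hgeo (r, b) hB)
    · rw [Finset.mem_singleton] at hA hB
      rw [hA, hB]
  · intro a b j hab hA hB
    rcases Finset.mem_union.mp hA with hA | hA <;> rcases Finset.mem_union.mp hB with hB | hB
    · exact h3 a b j hab hA hB
    · rw [Finset.mem_singleton] at hB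
      rcases hmax (a, j) hA with h | ⟨h, h'⟩
      · rw [hB]; exact h
      · exfalso
        have hd1 : d.1 = b := by rw [← hB]
        have hd2 : d.2 = j := by rw [← hB]
        rw [hd1, hd2] at h'
        simp only [Prod.fst, Prod.snd] at h'
        omega
    · rw [Finset.mem_singleton] at hA
      exact absurd ⟨by rw [← hA]; exact le_of_lt hab, by rw [← hA]⟩ (hgeo (b, j) hB)
    · rw [Finset.mem_singleton] at hA hB
      exfalso
      have : a = b := congrArg Prod.fst (hA.trans hB.symm)
      omega

lemma phiRel_symm {T T' : XTuple μ lam} (h : PhiRel T T') : PhiRel T' T := by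
  rcases h with ⟨c, i, hcell, hS, hk, he, hlow, hmid, hhigh⟩ |
    ⟨c, i, hcell, hM, hk, he, hlow, hhigh⟩ | ⟨hnone, rfl⟩
  · -- split case: T' is obtained from T by splitting piece i at c
    obtain ⟨_, hmaxT⟩ := cellOf_eq_some_iff.mp hcell
    obtain ⟨hik, hcp, hcard, hmaxp⟩ := hS
    have hccell : c ∈ (T.chain (i + 1)).cells := by
      simp only [pieceCells, Finset.mem_sdiff] at hcp; exact hcp.1
    have p_low : ∀ j, j < i → pieceCells T' j = pieceCells T j := by
      intro j hj
      simp only [pieceCells, hlow j (by omega), hlow (j + 1) (by omega)]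
    have p_i : pieceCells T' i = (pieceCells T i).erase c := by
      simp only [pieceCells, hmid, hlow i le_rfl]
      ext x
      simp only [Finset.mem_sdiff, Finset.mem_erase]
      tauto
    have p_i1 : pieceCells T' (i + 1) = {c} := by
      have e1 : i + 2 - 1 = i + 1 := by omega
      have h2 : T'.chain (i + 2) = T.chain (i + 1) := by
        rw [hhigh (i + 2) (by omega), e1]
      simp only [pieceCells]
      rw [show i + 1 + 1 = i + 2 from rfl, h2, hmid]
      ext x
      simp only [Finset.mem_sdiff, Finset.mem_erase, Finset.mem_singleton]
      constructor
      · rintro ⟨hx1, hx2⟩; by_contra hne; exact hx2 ⟨hne, hx1⟩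
      · rintro rfl; exact ⟨hccell, fun h => h.1 rfl⟩
    have p_high : ∀ j, i + 2 ≤ j → pieceCells T' j = pieceCells T (j - 1) := by
      intro j hj
      have e1 : j - 1 + 1 = j := by omega
      have e2 : j + 1 - 1 = j := by omega
      simp only [pieceCells, hhigh j hj, hhigh (j + 1) (by omega), e1, e2]
    have hpiece_eq : (pieceCells T i).erase c ∪ {c} = pieceCells T i := by
      ext x
      simp only [Finset.mem_union, Finset.mem_erase, Finset.mem_singleton]
      constructor
      · rintro (⟨_, h⟩ | rfl)
        · exact h
        · exact hcp
      · intro hx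
        by_cases hxc : x = c
        · exact Or.inr hxc
        · exact Or.inl ⟨hxc, hx⟩
    have hM' : MergeableAt T' c (i + 1) := by
      refine ⟨by omega, by omega, ?_, ?_, ?_, ?_⟩
      · rw [p_i1]; exact Finset.mem_singleton_self c
      · rw [p_i1]; exact Finset.card_singleton c
      · simp only [Nat.add_sub_cancel, he, p_i, p_i1, hpiece_eq]
        exact T.piece_ssyt i hik
      · simp only [Nat.add_sub_cancel, he, p_i]
        intro c' hc'
        rw [Finset.mem_erase] at hc'
        exact hmaxp c' hc'.2 hc'.1
    have hmax' : ∀ d, (SplittableCell T' d ∨ MergeableCell T' d) → d ≠ c →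
        cellLT T.entry d c := by
      intro d hd hdc
      rcases hd with ⟨j, hj⟩ | ⟨j, hj⟩
      · obtain ⟨hjk, hdp, hcard', hmaxj⟩ := hj
        rw [he] at hmaxj
        rcases show j < i ∨ j = i ∨ j = i + 1 ∨ i + 2 ≤ j by omega with hc1 | rfl | rfl | hc1
        · rw [p_low j hc1] at hdp hcard' hmaxj
          exact hmaxT d (Or.inl ⟨j, by omega, hdp, hcard', hmaxj⟩) hdc
        · rw [p_i, Finset.mem_erase] at hdp
          exact hmaxp d hdp.2 hdp.1
        · rw [p_i1] at hcard'
          simp at hcard'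
        · rw [p_high j hc1] at hdp hcard' hmaxj
          exact hmaxT d (Or.inl ⟨j - 1, by omega, hdp, hcard', hmaxj⟩) hdc
      · obtain ⟨hj1, hjk, hdp, hcard', hssyt', hmaxj⟩ := hj
        rw [he] at hssyt' hmaxj
        rcases show j < i ∨ j = i ∨ j = i + 1 ∨ j = i + 2 ∨ i + 3 ≤ j by omega with
          hc1 | rfl | rfl | rfl | hc1
        · rw [p_low (j - 1) (by omega)] at hssyt' hmaxj
          rw [p_low j hc1] at hdp hcard' hssyt'
          exact hmaxT d (Or.inr ⟨j, hj1, by omega, hdp, hcard', hssyt', hmaxj⟩) hdc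
        · rw [p_i, Finset.mem_erase] at hdp
          exact hmaxp d hdp.2 hdp.1
        · rw [p_i1, Finset.mem_singleton] at hdp
          exact absurd hdp hdc
        · exfalso
          have e1 : i + 2 - 1 = i + 1 := by omega
          rw [p_high (i + 2) (by omega)] at hdp hcard' hssyt'
          rw [e1] at hdp hcard' hssyt' hmaxj
          rw [p_i1] at hssyt' hmaxj
          have hcd : cellLT T.entry c d := hmaxj c (Finset.mem_singleton_self c)
          have hik1 : i + 1 < T.k := by omega
          have hpd : pieceCells T (i + 1) = {d} := by
            obtain ⟨a, ha⟩ := Finset.card_eq_one.mp hcard'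
            rw [ha] at hdp ⊢
            rw [Finset.mem_singleton] at hdp
            rw [hdp]
          have hmaxe : ∀ e ∈ pieceCells T i, cellLT T.entry e d := by
            intro e hee
            by_cases hec : e = c
            · rw [hec]; exact hcd
            · exact cellLT_trans (hmaxp e hee hec) hcd
          have hMd : MergeableAt T d (i + 1) := by
            refine ⟨by omega, hik1, hdp, hcard', ?_, ?_⟩
            · simp only [Nat.add_sub_cancel, hpd]
              exact ssyt_union_single T hik1 hdp hmaxe
            · simp only [Nat.add_sub_cancel]
              exact hmaxe
          exact cellLT_asymm hcd (hmaxT d (Or.inr ⟨i + 1, hMd⟩) hdc)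
        · rw [p_high (j - 1) (by omega)] at hssyt' hmaxj
          rw [p_high j (by omega)] at hdp hcard' hssyt'
          exact hmaxT d (Or.inr ⟨j - 1, by omega, by omega, hdp, hcard', hssyt', hmaxj⟩) hdc
    have hcell' : cellOf T' = some c := by
      rw [cellOf_eq_some_iff]
      refine ⟨Or.inr ⟨i + 1, hM'⟩, fun d hd hdc => ?_⟩
      rw [he]
      exact hmax' d hd hdc
    right; left
    refine ⟨c, i + 1, hcell', hM', hk.symm, he.symm, ?_, ?_⟩
    · intro j hj
      exact (hlow j (by omega)).symm
    · intro j hj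
      have e1 : j + 1 - 1 = j := by omega
      rw [hhigh (j + 1) (by omega), e1]
  · -- merge case
    obtain ⟨_, hmaxT⟩ := cellOf_eq_some_iff.mp hcell
    obtain ⟨hi1, hik, hcp, hcard1, hssytU, hprevmax⟩ := hM
    have e_i : i - 1 + 1 = i := by omega
    have pieceI : pieceCells T i = {c} := by
      obtain ⟨a, ha⟩ := Finset.card_eq_one.mp hcard1
      rw [ha] at hcp ⊢
      rw [Finset.mem_singleton] at hcp
      rw [hcp]
    have p_low : ∀ j, j + 1 < i → pieceCells T' j = pieceCells T j := by
      intro j hj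
      simp only [pieceCells, hlow j (by omega), hlow (j + 1) (by omega)]
    have p_im1 : pieceCells T' (i - 1) = pieceCells T (i - 1) ∪ pieceCells T i := by
      simp only [pieceCells, e_i]
      rw [hhigh i le_rfl, hlow (i - 1) (by omega)]
      ext x
      simp only [Finset.mem_sdiff, Finset.mem_union]
      constructor
      · rintro ⟨hx1, hx2⟩
        by_cases hxi : x ∈ (T.chain i).cells
        · exact Or.inl ⟨hxi, hx2⟩
        · exact Or.inr ⟨hx1, hxi⟩
      · rintro (⟨hx1, hx2⟩ | ⟨hx1, hx2⟩)
        · exact ⟨chain_mono T (by omega) hx1, hx2⟩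
        · exact ⟨hx1, fun hmem => hx2 (chain_mono T (by omega) hmem)⟩
    have p_high : ∀ j, i ≤ j → pieceCells T' j = pieceCells T (j + 1) := by
      intro j hj
      simp only [pieceCells, hhigh j hj, hhigh (j + 1) (by omega)]
    obtain ⟨e0, he0mem, he0not⟩ := Finset.exists_of_ssubset (T.chain_strict (i - 1) (by omega))
    have he0 : e0 ∈ pieceCells T (i - 1) := by
      simp only [pieceCells, Finset.mem_sdiff]
      exact ⟨he0mem, he0not⟩
    have hcnotlow : c ∉ (T.chain i).cells := by
      simp only [pieceCells, Finset.mem_sdiff] at hcp; exact hcp.2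
    have he0c : e0 ≠ c := by
      rintro rfl
      refine hcnotlow (chain_mono T (by omega) he0mem)
    have hcmem' : c ∈ pieceCells T' (i - 1) := by
      rw [p_im1, Finset.mem_union]; exact Or.inr hcp
    have hS' : SplittableAt T' c (i - 1) := by
      refine ⟨by omega, hcmem', ?_, ?_⟩
      · rw [Finset.one_lt_card]
        exact ⟨e0, by rw [p_im1, Finset.mem_union]; exact Or.inl he0, c, hcmem', he0c⟩
      · intro c' hc' hne
        rw [p_im1, Finset.mem_union] at hc'
        rcases hc' with hc' | hc'
        · rw [he]; exact hprevmax c' hc'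
        · rw [pieceI, Finset.mem_singleton] at hc'
          exact absurd hc' hne
    have hmax' : ∀ d, (SplittableCell T' d ∨ MergeableCell T' d) → d ≠ c →
        cellLT T.entry d c := by
      intro d hd hdc
      rcases hd with ⟨j, hj⟩ | ⟨j, hj⟩
      · obtain ⟨hjk, hdp, hcard', hmaxj⟩ := hj
        rw [he] at hmaxj
        rcases show j + 1 < i ∨ j = i - 1 ∨ i ≤ j by omega with hc1 | rfl | hc1
        · rw [p_low j hc1] at hdp hcard' hmaxj
          exact hmaxT d (Or.inl ⟨j, by omega, hdp, hcard', hmaxj⟩) hdc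
        · rw [p_im1, Finset.mem_union] at hdp
          rcases hdp with hdp | hdp
          · exact hprevmax d hdp
          · rw [pieceI, Finset.mem_singleton] at hdp
            exact absurd hdp hdc
        · rw [p_high j hc1] at hdp hcard' hmaxj
          exact hmaxT d (Or.inl ⟨j + 1, by omega, hdp, hcard', hmaxj⟩) hdc
      · obtain ⟨hj1, hjk, hdp, hcard', hssyt', hmaxj⟩ := hj
        rw [he] at hssyt' hmaxj
        rcases show j + 1 < i ∨ j = i - 1 ∨ j = i ∨ i + 1 ≤ j by omega with
          hc1 | rfl | rfl | hc1
        · rw [p_low (j - 1) (by omega)] at hssyt' hmaxj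
          rw [p_low j hc1] at hdp hcard' hssyt'
          exact hmaxT d (Or.inr ⟨j, hj1, by omega, hdp, hcard', hssyt', hmaxj⟩) hdc
        · exfalso
          rw [p_im1] at hcard'
          have h2 : 1 < (pieceCells T (i - 1) ∪ pieceCells T i).card := by
            rw [Finset.one_lt_card]
            exact ⟨e0, Finset.mem_union.mpr (Or.inl he0), c,
              Finset.mem_union.mpr (Or.inr hcp), he0c⟩
          omega
        · exfalso
          rw [p_high j le_rfl] at hdp hcard'
          rw [p_im1] at hssyt' hmaxj
          rw [p_high j le_rfl] at hssyt'
          have hcd : cellLT T.entry c d := hmaxj c (Finset.mem_union.mpr (Or.inr hcp))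
          have hMd : MergeableAt T d (j + 1) := by
            refine ⟨by omega, by omega, hdp, hcard', ?_, ?_⟩
            · simp only [Nat.add_sub_cancel]
              refine IsSSYTOn.mono ?_ hssyt'
              exact Finset.union_subset_union Finset.subset_union_right (Finset.Subset.refl _)
            · simp only [Nat.add_sub_cancel, pieceI]
              intro c' hc'
              rw [Finset.mem_singleton] at hc'
              rw [hc']
              exact hcd
          exact cellLT_asymm hcd (hmaxT d (Or.inr ⟨j + 1, hMd⟩) hdc)
        · have e3 : j - 1 + 1 = j := by omega
          rw [p_high (j - 1) (by omega)] at hssyt' hmaxj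
          rw [p_high j (by omega)] at hdp hcard' hssyt'
          rw [e3] at hssyt' hmaxj
          refine hmaxT d (Or.inr ⟨j + 1, by omega, by omega, hdp, hcard', ?_, ?_⟩) hdc
          · simp only [Nat.add_sub_cancel]
            exact hssyt'
          · simp only [Nat.add_sub_cancel]
            exact hmaxj
    have hcell' : cellOf T' = some c := by
      rw [cellOf_eq_some_iff]
      refine ⟨Or.inl ⟨i - 1, hS'⟩, fun d hd hdc => ?_⟩
      rw [he]
      exact hmax' d hd hdc
    left
    refine ⟨c, i - 1, hcell', hS', hk.symm, he.symm, ?_, ?_, ?_⟩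
    · intro j hj
      exact (hlow j (by omega)).symm
    · rw [e_i, hhigh i le_rfl]
      ext x
      simp only [Finset.mem_erase]
      constructor
      · intro hx
        refine ⟨?_, chain_mono T (by omega) hx⟩
        rintro rfl
        exact hcnotlow hx
      · rintro ⟨hx1, hx2⟩
        by_cases hxi : x ∈ (T.chain i).cells
        · exact hxi
        · exfalso
          apply hx1
          have hxp : x ∈ pieceCells T i := by
            simp only [pieceCells, Finset.mem_sdiff]
            exact ⟨hx2, hxi⟩
          rw [pieceI, Finset.mem_singleton] at hxp
          exact hxp
    · intro j hj
      have e4 : j - 1 + 1 = j := by omega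
      rw [hhigh (j - 1) (by omega), e4]
  · exact Or.inr (Or.inr ⟨hnone, rfl⟩)

lemma phiRel_unique {S A B : XTuple μ lam} (hA : PhiRel S A) (hB : PhiRel S B) : A = B := by
  rcases hA with ⟨c, i, hc, hS, hk, he, hlow, hmid, hhigh⟩ |
    ⟨c, i, hc, hM, hk, he, hlow, hhigh⟩ | ⟨hc, rfl⟩ <;>
    rcases hB with ⟨c', i', hc', hS', hk', he', hlow', hmid', hhigh'⟩ |
      ⟨c', i', hc', hM', hk', he', hlow', hhigh'⟩ | ⟨hc', h9⟩
  · -- split / split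
    rw [hc] at hc'
    obtain rfl : c = c' := Option.some_inj.mp hc'
    obtain rfl : i = i' := mem_piece_unique S hS.2.1 hS'.2.1
    refine XTuple.ext' (by omega) (funext fun j => ?_) (he.trans he'.symm)
    rcases show j ≤ i ∨ j = i + 1 ∨ i + 2 ≤ j by omega with hj | rfl | hj
    · exact (hlow j hj).trans (hlow' j hj).symm
    · apply YoungDiagram.ext
      rw [hmid, hmid']
    · exact (hhigh j hj).trans (hhigh' j hj).symm
  · -- split / merge : impossible
    rw [hc] at hc'
    obtain rfl : c = c' := Option.some_inj.mp hc'
    obtain rfl : i = i' := mem_piece_unique S hS.2.1 hM'.2.2.1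
    have h1 := hS.2.2.1
    have h2 := hM'.2.2.2.1
    omega
  · rw [hc] at hc'
    exact absurd hc' (by simp)
  · -- merge / split : impossible
    rw [hc] at hc'
    obtain rfl : c = c' := Option.some_inj.mp hc'
    obtain rfl : i = i' := mem_piece_unique S hM.2.2.1 hS'.2.1
    have h1 := hM.2.2.2.1
    have h2 := hS'.2.2.1
    omega
  · -- merge / merge
    rw [hc] at hc'
    obtain rfl : c = c' := Option.some_inj.mp hc'
    obtain rfl : i = i' := mem_piece_unique S hM.2.2.1 hM'.2.2.1
    refine XTuple.ext' (by omega) (funext fun j => ?_) (he.trans he'.symm)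
    rcases Nat.lt_or_ge j i with hj | hj
    · exact (hlow j hj).trans (hlow' j hj).symm
    · exact (hhigh j hj).trans (hhigh' j hj).symm
  · rw [hc] at hc'
    exact absurd hc' (by simp)
  · rw [hc'] at hc
    exact absurd hc (by simp)
  · rw [hc'] at hc
    exact absurd hc (by simp)
  · rw [h9]

end Aux


/-- The map `Φ : X_μ^λ → X_μ^λ` is an involution: `Φ(Φ(T)) = T` for every `T ∈ X_μ^λ`. -/
theorem phi_involution (μ lam : YoungDiagram) (hsub : μ ≤ lam) (T : XTuple μ lam) :
    Phi (Phi T) = T := by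
  classical
  by_cases h : ∃ T', PhiRel T T'
  · have h1 : Phi T = h.choose := by
      simp only [Phi]
      rw [dif_pos h]
    have hrel' : PhiRel h.choose T := phiRel_symm h.choose_spec
    have h2 : ∃ T'', PhiRel h.choose T'' := ⟨T, hrel'⟩
    have h3 : Phi h.choose = h2.choose := by
      simp only [Phi]
      rw [dif_pos h2]
    rw [h1, h3]
    exact phiRel_unique h2.choose_spec hrel'
  · have h1 : Phi T = T := by
      simp only [Phi]
      rw [dif_neg h]
    rw [h1, h1]
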